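/- For an integrable random variable X on an atomless probability space and any t ∈ ℝ, E[(X − t)_+] = ∫ from ℙ(X ≤ t) to 1 of (VaR⁻_β(X) − t) dβ = ∫ from 0 to 1 of (VaR⁻_β(X) − t)_+ dβ. -/
import Mathlib


open MeasureTheory Set

/-- An atomless measure: every set of nonzero measure can be split nontrivially. -/
def Atomless {Ω : Type*} [MeasurableSpace Ω] (μ : Measure Ω) : Prop :=
  ∀ A : Set Ω, MeasurableSet A → μ A ≠ 0 →
    ∃ B ⊆ A, MeasurableSet B ∧ μ B ≠ 0 ∧ μ B ≠ μ A

/-- Left quantile (lower Value-at-Risk) of `X` at level `β`. -/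
noncomputable def VaR {Ω : Type*} [MeasurableSpace Ω] (μ : Measure Ω) (X : Ω → ℝ) (β : ℝ) : ℝ :=
  sInf {t : ℝ | ENNReal.ofReal β ≤ μ {ω | X ω ≤ t}}

section aux

variable {Ω : Type*} [MeasurableSpace Ω] (μ : Measure Ω) [IsProbabilityMeasure μ]
  (X : Ω → ℝ) (hX : Measurable X)

lemma VaR_le_iff (hX : Measurable X) {β : ℝ} (hβ0 : 0 < β) (hβ1 : β < 1) (x : ℝ) :
    VaR μ X β ≤ x ↔ ENNReal.ofReal β ≤ μ {ω | X ω ≤ x} := by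
  set S := {t : ℝ | ENNReal.ofReal β ≤ μ {ω | X ω ≤ t}} with hS
  have hmono : ∀ {a b : ℝ}, a ≤ b → μ {ω | X ω ≤ a} ≤ μ {ω | X ω ≤ b} :=
    fun {a b} hab => measure_mono (fun ω hω => le_trans hω hab)
  have hne : S.Nonempty := by
    have hU : (⋃ n : ℕ, {ω | X ω ≤ (n : ℝ)}) = univ := by
      ext ω; simp only [mem_iUnion, mem_univ, iff_true, mem_setOf_eq]
      obtain ⟨n, hn⟩ := exists_nat_ge (X ω)
      exact ⟨n, hn⟩
    have hmon : Monotone (fun n : ℕ => {ω | X ω ≤ (n : ℝ)}) := by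
      intro a b hab ω hω
      simp only [mem_setOf_eq] at hω ⊢
      exact le_trans hω (Nat.cast_le.2 hab)
    have hdir : Directed (· ⊆ ·) (fun n : ℕ => {ω | X ω ≤ (n : ℝ)}) := hmon.directed_le
    have : (1 : ENNReal) = ⨆ n : ℕ, μ {ω | X ω ≤ (n : ℝ)} := by
      rw [← hdir.measure_iUnion, hU, measure_univ]
    have hlt : ENNReal.ofReal β < ⨆ n : ℕ, μ {ω | X ω ≤ (n : ℝ)} := by
      rw [← this]
      exact lt_of_lt_of_le (ENNReal.ofReal_lt_one.2 hβ1) le_rfl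
    obtain ⟨n, hn⟩ := lt_iSup_iff.1 hlt
    exact ⟨n, hn.le⟩
  have hbdd : BddBelow S := by
    have hI : (⋂ n : ℕ, {ω | X ω ≤ -(n : ℝ)}) = ∅ := by
      ext ω; simp only [mem_iInter, mem_setOf_eq, mem_empty_iff_false, iff_false, not_forall]
      obtain ⟨n, hn⟩ := exists_nat_gt (-(X ω))
      exact ⟨n, by push_neg; linarith⟩
    have hdir : Directed (· ⊇ ·) (fun n : ℕ => {ω | X ω ≤ -(n : ℝ)}) := by
      intro a b
      refine ⟨max a b, fun ω hω => ?_, fun ω hω => ?_⟩ <;>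
        · simp only [mem_setOf_eq] at hω ⊢
          refine le_trans hω (neg_le_neg ?_)
          simp [Nat.cast_le]
    have hinf : (⨅ n : ℕ, μ {ω | X ω ≤ -(n : ℝ)}) = 0 := by
      rw [← Directed.measure_iInter (fun n => (measurableSet_le hX measurable_const).nullMeasurableSet) hdir
        ⟨0, measure_ne_top μ _⟩, hI, measure_empty]
    have : (⨅ n : ℕ, μ {ω | X ω ≤ -(n : ℝ)}) < ENNReal.ofReal β := by
      rw [hinf]; exact ENNReal.ofReal_pos.2 hβ0
    obtain ⟨n, hn⟩ := iInf_lt_iff.1 this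
    refine ⟨-(n : ℝ), fun x hx => ?_⟩
    by_contra hcon
    push_neg at hcon
    exact absurd (le_trans hx (hmono hcon.le)) (not_le.2 hn)
  have hmem : sInf S ∈ S := by
    set a := sInf S with ha
    have hmemε : ∀ n : ℕ, a + 1 / (n + 1) ∈ S := by
      intro n
      obtain ⟨x, hxS, hxlt⟩ := (Real.lt_sInf_add_pos hne (by positivity : (0:ℝ) < 1 / (n+1)))
      exact le_trans hxS (hmono hxlt.le)
    have hIa : (⋂ n : ℕ, {ω | X ω ≤ a + 1 / (n + 1)}) = {ω | X ω ≤ a} := by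
      ext ω
      simp only [mem_iInter, mem_setOf_eq]
      constructor
      · intro h
        by_contra hcon
        push_neg at hcon
        obtain ⟨n, hn⟩ := exists_nat_one_div_lt (by linarith : (0:ℝ) < X ω - a)
        have := h n
        linarith
      · intro h n
        have : (0:ℝ) < 1 / (n + 1) := by positivity
        linarith
    have hdir : Directed (· ⊇ ·) (fun n : ℕ => {ω | X ω ≤ a + 1 / (n + 1)}) := by
      intro m k
      refine ⟨max m k, fun ω hω => ?_, fun ω hω => ?_⟩ <;>
        · simp only [mem_setOf_eq] at hω ⊢
          refine le_trans hω (by gcongr <;> simp [Nat.cast_le])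
    have : μ {ω | X ω ≤ a} = ⨅ n : ℕ, μ {ω | X ω ≤ a + 1 / (n + 1)} := by
      rw [← hIa, Directed.measure_iInter (fun n => (measurableSet_le hX measurable_const).nullMeasurableSet) hdir
        ⟨0, measure_ne_top μ _⟩]
    have : ENNReal.ofReal β ≤ μ {ω | X ω ≤ a} := by
      rw [this]; exact le_iInf (fun n => hmemε n)
    exact this
  constructor
  · intro h
    exact le_trans hmem (hmono h)
  · intro h
    exact csInf_le hbdd h


noncomputable def qf {Ω : Type*} [MeasurableSpace Ω] (μ : Measure Ω) (X : Ω → ℝ) : ℝ → ℝ :=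
  (Ioo (0:ℝ) 1).piecewise (VaR μ X) 0

lemma qf_measurable (hX : Measurable X) : Measurable (qf μ X) := by
  apply measurable_of_Iic
  intro x
  have hpre : qf μ X ⁻¹' Iic x =
      (Ioo (0:ℝ) 1 ∩ Iic (μ {ω | X ω ≤ x}).toReal) ∪
        ((Ioo (0:ℝ) 1)ᶜ ∩ {_β : ℝ | (0:ℝ) ≤ x}) := by
    ext β
    by_cases hβ : β ∈ Ioo (0:ℝ) 1
    · have hq : qf μ X β = VaR μ X β := Set.piecewise_eq_of_mem _ _ _ hβ
      simp only [mem_preimage, mem_Iic, hq, mem_union, mem_inter_iff,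
        hβ, mem_compl_iff, not_true_eq_false, false_and, or_false, true_and, mem_setOf_eq]
      rw [VaR_le_iff μ X hX hβ.1 hβ.2 x,
        ENNReal.ofReal_le_iff_le_toReal (measure_ne_top μ _)]
    · have hq : qf μ X β = 0 := Set.piecewise_eq_of_notMem _ _ _ hβ
      simp only [mem_preimage, mem_Iic, hq, mem_union, mem_inter_iff,
        hβ, mem_compl_iff, not_false_eq_true, false_and, false_or, true_and, mem_setOf_eq]
  rw [hpre]
  exact (measurableSet_Ioo.inter measurableSet_Iic).union
    (measurableSet_Ioo.compl.inter (MeasurableSet.const _))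

lemma map_qf (hX : Measurable X) :
    (volume.restrict (Ioo (0:ℝ) 1)).map (qf μ X) = μ.map X := by
  haveI hfin : IsFiniteMeasure (volume.restrict (Ioo (0:ℝ) 1)) :=
    ⟨by rw [Measure.restrict_apply_univ, Real.volume_Ioo]; exact ENNReal.ofReal_lt_top⟩
  haveI : IsFiniteMeasure ((volume.restrict (Ioo (0:ℝ) 1)).map (qf μ X)) :=
    Measure.isFiniteMeasure_map _ _
  refine Measure.ext_of_Iic _ _ (fun a => ?_)
  rw [Measure.map_apply (qf_measurable μ X hX) measurableSet_Iic,
    Measure.map_apply hX measurableSet_Iic,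
    Measure.restrict_apply (qf_measurable μ X hX measurableSet_Iic)]
  set c := (μ {ω | X ω ≤ a}).toReal with hc
  have hceq : μ {ω | X ω ≤ a} = ENNReal.ofReal c :=
    (ENNReal.ofReal_toReal (measure_ne_top μ _)).symm
  have hc0 : (0:ℝ) ≤ c := ENNReal.toReal_nonneg
  have hc1 : c ≤ 1 := by
    have := ENNReal.toReal_mono ENNReal.one_ne_top (prob_le_one (μ := μ) (s := {ω | X ω ≤ a}))
    simpa using this
  have hset : qf μ X ⁻¹' Iic a ∩ Ioo 0 1 = Ioo 0 1 ∩ Iic c := by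
    ext β
    simp only [mem_inter_iff, mem_preimage, mem_Iic]
    constructor
    · rintro ⟨h1, h2⟩
      refine ⟨h2, ?_⟩
      rw [show qf μ X β = VaR μ X β from Set.piecewise_eq_of_mem _ _ _ h2] at h1
      have h3 := (VaR_le_iff μ X hX h2.1 h2.2 a).1 h1
      rw [hceq] at h3
      exact (ENNReal.ofReal_le_ofReal_iff hc0).1 h3
    · rintro ⟨h2, h1⟩
      refine ⟨?_, h2⟩
      rw [show qf μ X β = VaR μ X β from Set.piecewise_eq_of_mem _ _ _ h2]
      refine (VaR_le_iff μ X hX h2.1 h2.2 a).2 ?_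
      rw [hceq]
      exact ENNReal.ofReal_le_ofReal h1
  rw [hset]
  have hXa : X ⁻¹' Iic a = {ω | X ω ≤ a} := rfl
  rw [hXa, hceq]
  rcases eq_or_lt_of_le hc1 with h | h
  · have heq : Ioo (0:ℝ) 1 ∩ Iic c = Ioo 0 1 :=
      inter_eq_left.2 (fun β hβ => by rw [← h] at hβ; exact hβ.2.le)
    rw [heq, Real.volume_Ioo, ← h]
    norm_num
  · have heq : Ioo (0:ℝ) 1 ∩ Iic c = Ioc 0 c := by
      ext β
      simp only [mem_inter_iff, mem_Ioo, mem_Iic, mem_Ioc]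
      exact ⟨fun ⟨⟨h0, _⟩, hβc⟩ => ⟨h0, hβc⟩,
        fun ⟨h0, hβc⟩ => ⟨⟨h0, lt_of_le_of_lt hβc h⟩, hβc⟩⟩
    rw [heq, Real.volume_Ioc]
    norm_num


private lemma VaR_main (hXmeas : Measurable X) (hXint : Integrable X μ) (t : ℝ) :
    (∫ ω, max (X ω - t) 0 ∂μ)
        = (∫ β in Set.Ioo (μ {ω | X ω ≤ t}).toReal 1, (VaR μ X β - t)) ∧
      (∫ ω, max (X ω - t) 0 ∂μ)
        = ∫ β in Set.Ioo (0 : ℝ) 1, max (VaR μ X β - t) 0 := by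
  set c := (μ {ω | X ω ≤ t}).toReal with hc
  have hc0 : (0:ℝ) ≤ c := ENNReal.toReal_nonneg
  have hc1 : c ≤ 1 := by
    simpa using ENNReal.toReal_mono ENNReal.one_ne_top (prob_le_one (μ := μ) (s := {ω | X ω ≤ t}))
  have hg0 : Measurable fun y : ℝ => max (y - t) 0 :=
    (measurable_id.sub measurable_const).max measurable_const
  have hmap := map_qf μ X hXmeas
  have hcong : ∀ β ∈ Ioo (0:ℝ) 1, max (qf μ X β - t) 0 = max (VaR μ X β - t) 0 := fun β hβ => by
    rw [show qf μ X β = VaR μ X β from Set.piecewise_eq_of_mem _ _ _ hβ]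
  have hstep1 : ∫ ω, max (X ω - t) 0 ∂μ = ∫ y, max (y - t) 0 ∂(μ.map X) :=
    (integral_map hXmeas.aemeasurable hg0.aestronglyMeasurable).symm
  have hstep2 : ∫ y, max (y - t) 0 ∂(μ.map X) = ∫ β in Ioo (0:ℝ) 1, max (qf μ X β - t) 0 := by
    rw [← hmap, integral_map (qf_measurable μ X hXmeas).aemeasurable hg0.aestronglyMeasurable]
  have hsecond : ∫ ω, max (X ω - t) 0 ∂μ = ∫ β in Ioo (0:ℝ) 1, max (VaR μ X β - t) 0 := by
    rw [hstep1, hstep2]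
    exact setIntegral_congr_fun measurableSet_Ioo (fun β hβ => hcong β hβ)
  have hint0 : Integrable (fun ω => max (X ω - t) 0) μ :=
    (hXint.sub (integrable_const t)).pos_part
  have hintm : Integrable (fun y : ℝ => max (y - t) 0) (μ.map X) :=
    (integrable_map_measure hg0.aestronglyMeasurable hXmeas.aemeasurable).2 hint0
  have hintq : IntegrableOn (fun β => max (VaR μ X β - t) 0) (Ioo (0:ℝ) 1) := by
    rw [← hmap] at hintm
    have h1 : Integrable ((fun y => max (y - t) 0) ∘ qf μ X)
        (volume.restrict (Ioo (0:ℝ) 1)) :=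
      (integrable_map_measure hg0.aestronglyMeasurable
        (qf_measurable μ X hXmeas).aemeasurable).1 hintm
    refine h1.congr ((ae_restrict_iff' measurableSet_Ioo).2 (ae_of_all _ fun β hβ => ?_))
    exact hcong β hβ
  have hVaRle : ∀ β ∈ Ioo (0:ℝ) 1, (VaR μ X β ≤ t ↔ β ≤ c) := by
    intro β hβ
    rw [VaR_le_iff μ X hXmeas hβ.1 hβ.2 t,
      show μ {ω | X ω ≤ t} = ENNReal.ofReal c from
        (ENNReal.ofReal_toReal (measure_ne_top μ _)).symm,
      ENNReal.ofReal_le_ofReal_iff hc0]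
  have hsplit : Ioo (0:ℝ) 1 = (Ioo 0 1 ∩ Iic c) ∪ Ioo c 1 := by
    ext β
    simp only [mem_union, mem_inter_iff, mem_Ioo, mem_Iic]
    constructor
    · rintro ⟨h0, h1⟩
      rcases le_or_gt β c with h | h
      · exact Or.inl ⟨⟨h0, h1⟩, h⟩
      · exact Or.inr ⟨h, h1⟩
    · rintro (⟨⟨h0, h1⟩, _⟩ | ⟨h1, h2⟩)
      · exact ⟨h0, h1⟩
      · exact ⟨lt_of_le_of_lt hc0 h1, h2⟩
  have hdisj : Disjoint (Ioo (0:ℝ) 1 ∩ Iic c) (Ioo c 1) := by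
    rw [Set.disjoint_left]
    rintro β ⟨_, hβc⟩ ⟨hβc', _⟩
    exact absurd hβc (not_le.2 hβc')
  have hsub1 : Ioo (0:ℝ) 1 ∩ Iic c ⊆ Ioo 0 1 := inter_subset_left
  have hsub2 : Ioo c 1 ⊆ Ioo (0:ℝ) 1 := Ioo_subset_Ioo hc0 le_rfl
  have hfirst : ∫ β in Ioo (0:ℝ) 1, max (VaR μ X β - t) 0
      = ∫ β in Ioo c 1, (VaR μ X β - t) := by
    rw [hsplit, setIntegral_union hdisj measurableSet_Ioo (hintq.mono_set hsub1)
      (hintq.mono_set hsub2)]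
    have hz : ∫ β in Ioo (0:ℝ) 1 ∩ Iic c, max (VaR μ X β - t) 0 = 0 := by
      calc ∫ β in Ioo (0:ℝ) 1 ∩ Iic c, max (VaR μ X β - t) 0
          = ∫ _β in Ioo (0:ℝ) 1 ∩ Iic c, (0:ℝ) := by
            refine setIntegral_congr_fun (measurableSet_Ioo.inter measurableSet_Iic)
              (fun β hβ => ?_)
            have h1 := (hVaRle β hβ.1).2 hβ.2
            exact max_eq_right (by linarith)
        _ = 0 := integral_zero _ _
    have hm : ∫ β in Ioo c 1, max (VaR μ X β - t) 0 = ∫ β in Ioo c 1, (VaR μ X β - t) := by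
      refine setIntegral_congr_fun measurableSet_Ioo (fun β hβ => ?_)
      have hβ1 : β ∈ Ioo (0:ℝ) 1 := hsub2 hβ
      have hne : ¬ VaR μ X β ≤ t := fun hle => absurd ((hVaRle β hβ1).1 hle) (not_le.2 hβ.1)
      exact max_eq_left (by linarith [not_le.1 hne])
    rw [hz, hm, zero_add]
  exact ⟨hsecond.trans hfirst, hsecond⟩

end aux

/-- For an integrable random variable `X` on an atomless probability space and any `t ∈ ℝ`,
`E[(X - t)_+] = ∫_{ℙ(X ≤ t)}^1 (VaR⁻_β(X) - t) dβ = ∫_0^1 (VaR⁻_β(X) - t)_+ dβ`. -/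
theorem mean_excess_eq_quantile_integral {Ω : Type*} [MeasurableSpace Ω] (μ : Measure Ω)
    [IsProbabilityMeasure μ] (hμ : Atomless μ) (X : Ω → ℝ)
    (hXmeas : Measurable X) (hXint : Integrable X μ) (t : ℝ) :
    (∫ ω, max (X ω - t) 0 ∂μ)
        = (∫ β in Set.Ioo (μ {ω | X ω ≤ t}).toReal 1, (VaR μ X β - t)) ∧
      (∫ ω, max (X ω - t) 0 ∂μ)
        = ∫ β in Set.Ioo (0 : ℝ) 1, max (VaR μ X β - t) 0 :=
  VaR_main μ X hXmeas hXint t
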